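/- Let n > 0, and let M : (0,∞) → ℝ satisfy M''(μ) − M'(μ)/μ − n²M(μ) = 0, and let N(ν) = C cos(nν) + D sin(nν) for constants C, D. Then ψ(μ,ν) = (μ²+ν²)^{-1/2} M(μ) N(ν) satisfies the tangent-sphere Stokes equation ∂²ψ/∂μ² + (μ²−ν²)/(μ(μ²+ν²)) ∂ψ/∂μ + 2ν/(μ²+ν²) ∂ψ/∂ν + ∂²ψ/∂ν² = 0 for all μ > 0, ν ∈ ℝ. -/

import Mathlib

/-!
Write ψ = ρ Φ with ρ = (μ² + ν²)^{-1/2}. Since ρ_μ = -μρ³, ρ_ν = -νρ³ and ρ_μμ + ρ_νν = ρ³, the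
bracketed operator conjugates to ρ (Φ_μμ - Φ_μ/μ + Φ_νν): the first-order terms in Φ_ν cancel and
those in Φ_μ collapse to -Φ_μ/μ. For Φ = M N with N'' = -n² N this is ρ N (M'' - M'/μ - n² M) = 0.
-/

open Real Filter Topology

theorem deriv_deriv_mul {𝕜 : Type*} [NontriviallyNormedField 𝕜] {f g : 𝕜 → 𝕜} {x : 𝕜}
    (hf : ∀ᶠ y in 𝓝 x, DifferentiableAt 𝕜 f y) (hg : ∀ᶠ y in 𝓝 x, DifferentiableAt 𝕜 g y)
    (hf' : DifferentiableAt 𝕜 (deriv f) x) (hg' : DifferentiableAt 𝕜 (deriv g) x) :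
    deriv (deriv fun y => f y * g y) x =
      deriv (deriv f) x * g x + 2 * (deriv f x * deriv g x) + f x * deriv (deriv g) x := by
  have hfg : deriv (fun y => f y * g y) =ᶠ[𝓝 x] fun y => deriv f y * g y + f y * deriv g y := by
    filter_upwards [hf, hg] with y hfy hgy
    exact deriv_mul hfy hgy
  rw [hfg.deriv_eq, ((hf'.hasDerivAt.fun_mul hg.self_of_nhds.hasDerivAt).fun_add
    (hf.self_of_nhds.hasDerivAt.fun_mul hg'.hasDerivAt)).deriv]
  ring

theorem hasDerivAt_inv_sqrt_sq_add {c x : ℝ} (h : 0 < x ^ 2 + c) :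
    HasDerivAt (fun t => (√(t ^ 2 + c))⁻¹) (-x * (√(x ^ 2 + c))⁻¹ ^ 3) x := by
  have hs : 0 < √(x ^ 2 + c) := sqrt_pos.mpr h
  refine ((((hasDerivAt_pow 2 x).add_const c).sqrt h.ne').fun_inv hs.ne').congr_deriv ?_
  field_simp
  norm_num

theorem eventually_hasDerivAt_inv_sqrt_sq_add {c x : ℝ} (h : 0 < x ^ 2 + c) :
    ∀ᶠ t in 𝓝 x, HasDerivAt (fun t => (√(t ^ 2 + c))⁻¹) (-t * (√(t ^ 2 + c))⁻¹ ^ 3) t := by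
  have hopen : IsOpen {t : ℝ | 0 < t ^ 2 + c} := isOpen_lt continuous_const (by fun_prop)
  filter_upwards [hopen.mem_nhds h] with t ht
  exact hasDerivAt_inv_sqrt_sq_add ht

theorem hasDerivAt_deriv_inv_sqrt_sq_add {c x : ℝ} (h : 0 < x ^ 2 + c) :
    HasDerivAt (deriv fun t => (√(t ^ 2 + c))⁻¹)
      ((3 * x ^ 2 * (√(x ^ 2 + c))⁻¹ ^ 2 - 1) * (√(x ^ 2 + c))⁻¹ ^ 3) x := by
  have hderiv : deriv (fun t => (√(t ^ 2 + c))⁻¹) =ᶠ[𝓝 x]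
      fun t => -t * (√(t ^ 2 + c))⁻¹ ^ 3 := by
    filter_upwards [eventually_hasDerivAt_inv_sqrt_sq_add h] with t ht
    exact ht.deriv
  refine HasDerivAt.congr_of_eventuallyEq ?_ hderiv
  refine ((hasDerivAt_neg x).fun_mul ((hasDerivAt_inv_sqrt_sq_add h).fun_pow 3)).congr_deriv ?_
  norm_num
  ring

theorem deriv_inv_sqrt_sq_add_mul {c x : ℝ} {F : ℝ → ℝ} (h : 0 < x ^ 2 + c)
    (hF : DifferentiableAt ℝ F x) :
    deriv (fun t => (√(t ^ 2 + c))⁻¹ * F t) x =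
      -x * (√(x ^ 2 + c))⁻¹ ^ 3 * F x + (√(x ^ 2 + c))⁻¹ * deriv F x :=
  ((hasDerivAt_inv_sqrt_sq_add h).fun_mul hF.hasDerivAt).deriv

theorem deriv_deriv_inv_sqrt_sq_add_mul {c x : ℝ} {F : ℝ → ℝ} (h : 0 < x ^ 2 + c)
    (hF : ∀ᶠ t in 𝓝 x, DifferentiableAt ℝ F t) (hF' : DifferentiableAt ℝ (deriv F) x) :
    deriv (deriv fun t => (√(t ^ 2 + c))⁻¹ * F t) x =
      (3 * x ^ 2 * (√(x ^ 2 + c))⁻¹ ^ 2 - 1) * (√(x ^ 2 + c))⁻¹ ^ 3 * F x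
        + 2 * (-x * (√(x ^ 2 + c))⁻¹ ^ 3 * deriv F x) + (√(x ^ 2 + c))⁻¹ * deriv (deriv F) x := by
  rw [deriv_deriv_mul
    ((eventually_hasDerivAt_inv_sqrt_sq_add h).mono fun _ ht => ht.differentiableAt)
    hF (hasDerivAt_deriv_inv_sqrt_sq_add h).differentiableAt hF',
    (hasDerivAt_deriv_inv_sqrt_sq_add h).deriv, (hasDerivAt_inv_sqrt_sq_add h).deriv]

theorem deriv_cos_sin_comb (n C D : ℝ) :
    (deriv fun t => C * cos (n * t) + D * sin (n * t)) =
      fun t => n * D * cos (n * t) + -(n * C) * sin (n * t) := by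
  funext t
  have hlin : HasDerivAt (fun t => n * t) n t := by simpa using (hasDerivAt_id t).const_mul n
  refine (((hlin.cos).const_mul C).add ((hlin.sin).const_mul D)).deriv.trans ?_
  ring

-- The left side is the bracket applied to ρ Φ, expanded by Leibniz with ρ's derivatives inserted.
theorem tangent_sphere_bracket_inv_sqrt_mul {μ ν ρ Φ Φμ Φμμ Φν Φνν : ℝ} (hμ : μ ≠ 0)
    (hρ : ρ ^ 2 * (μ ^ 2 + ν ^ 2) = 1) :
    ((3 * μ ^ 2 * ρ ^ 2 - 1) * ρ ^ 3 * Φ + 2 * (-μ * ρ ^ 3 * Φμ) + ρ * Φμμ)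
      + (μ ^ 2 - ν ^ 2) / (μ * (μ ^ 2 + ν ^ 2)) * (-μ * ρ ^ 3 * Φ + ρ * Φμ)
      + 2 * ν / (μ ^ 2 + ν ^ 2) * (-ν * ρ ^ 3 * Φ + ρ * Φν)
      + ((3 * ν ^ 2 * ρ ^ 2 - 1) * ρ ^ 3 * Φ + 2 * (-ν * ρ ^ 3 * Φν) + ρ * Φνν)
      = ρ * (Φμμ - Φμ / μ + Φνν) := by
  have hR : μ ^ 2 + ν ^ 2 ≠ 0 := by rintro h; simp [h] at hρ
  field_simp
  linear_combination (3 * ρ ^ 3 * μ * Φ * (μ ^ 2 + ν ^ 2) - 2 * ρ * μ * (ν * Φν + μ * Φμ)) * hρ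

theorem tangent_sphere_stokes_solution_general (n : ℝ) (M : ℝ → ℝ) (C D : ℝ)
    (hM1 : ∀ x > 0, DifferentiableAt ℝ M x)
    (hM2 : ∀ x > 0, DifferentiableAt ℝ (deriv M) x)
    (hM : ∀ μ > 0, deriv (deriv M) μ - deriv M μ / μ - n ^ 2 * M μ = 0) :
    ∀ μ > 0, ∀ ν : ℝ,
      deriv (deriv (fun m => (Real.sqrt (m ^ 2 + ν ^ 2))⁻¹ * M m *
          (C * Real.cos (n * ν) + D * Real.sin (n * ν)))) μ
        + (μ ^ 2 - ν ^ 2) / (μ * (μ ^ 2 + ν ^ 2)) *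
            deriv (fun m => (Real.sqrt (m ^ 2 + ν ^ 2))⁻¹ * M m *
              (C * Real.cos (n * ν) + D * Real.sin (n * ν))) μ
        + 2 * ν / (μ ^ 2 + ν ^ 2) *
            deriv (fun nn => (Real.sqrt (μ ^ 2 + nn ^ 2))⁻¹ * M μ *
              (C * Real.cos (n * nn) + D * Real.sin (n * nn))) ν
        + deriv (deriv (fun nn => (Real.sqrt (μ ^ 2 + nn ^ 2))⁻¹ * M μ *
            (C * Real.cos (n * nn) + D * Real.sin (n * nn)))) ν = 0 := by
  intro μ hμ ν
  have hR : 0 < μ ^ 2 + ν ^ 2 := by positivity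
  have hM_near : ∀ᶠ m in 𝓝 μ, DifferentiableAt ℝ M m := eventually_of_mem (Ioi_mem_nhds hμ) hM1
  have hμ1 := deriv_inv_sqrt_sq_add_mul (F := fun m => M m * (C * cos (n * ν) + D * sin (n * ν)))
    hR ((hM1 μ hμ).mul_const _)
  have hμ2 := deriv_deriv_inv_sqrt_sq_add_mul
    (F := fun m => M m * (C * cos (n * ν) + D * sin (n * ν))) hR
    (hM_near.mono fun _ h => h.mul_const _)
    (by rw [deriv_mul_const_field']; exact (hM2 μ hμ).mul_const _)
  have hν1 := deriv_inv_sqrt_sq_add_mul (c := μ ^ 2) (x := ν)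
    (F := fun t => M μ * (C * cos (n * t) + D * sin (n * t))) (by positivity) (by fun_prop)
  have hν2 := deriv_deriv_inv_sqrt_sq_add_mul (c := μ ^ 2) (x := ν)
    (F := fun t => M μ * (C * cos (n * t) + D * sin (n * t))) (by positivity)
    (.of_forall fun _ => by fun_prop) (by rw [deriv_const_mul_field', deriv_cos_sin_comb]; fun_prop)
  simp only [deriv_mul_const_field', deriv_const_mul_field', deriv_cos_sin_comb] at hμ1 hμ2 hν1 hν2
  simp only [add_comm _ (μ ^ 2)] at hν1 hν2
  simp only [mul_assoc]
  rw [hμ1, hμ2, hν1, hν2]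
  have hρ : (√(μ ^ 2 + ν ^ 2))⁻¹ ^ 2 * (μ ^ 2 + ν ^ 2) = 1 := by
    rw [inv_pow, sq_sqrt hR.le, inv_mul_cancel₀ hR.ne']
  linear_combination tangent_sphere_bracket_inv_sqrt_mul
    (Φ := M μ * (C * cos (n * ν) + D * sin (n * ν)))
    (Φμ := deriv M μ * (C * cos (n * ν) + D * sin (n * ν)))
    (Φμμ := deriv (deriv M) μ * (C * cos (n * ν) + D * sin (n * ν)))
    (Φν := M μ * (n * D * cos (n * ν) + -(n * C) * sin (n * ν)))
    (Φνν := M μ * (n * -(n * C) * cos (n * ν) + -(n * (n * D)) * sin (n * ν))) hμ.ne' hρ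
    + (√(μ ^ 2 + ν ^ 2))⁻¹ * (C * cos (n * ν) + D * sin (n * ν)) * hM μ hμ

theorem tangent_sphere_stokes_solution (n : ℝ) (hn : 0 < n) (M : ℝ → ℝ) (C D : ℝ)
    (hM1 : ∀ x > 0, DifferentiableAt ℝ M x)
    (hM2 : ∀ x > 0, DifferentiableAt ℝ (deriv M) x)
    (hM : ∀ μ > 0, deriv (deriv M) μ - deriv M μ / μ - n ^ 2 * M μ = 0) :
    ∀ μ > 0, ∀ ν : ℝ,
      deriv (deriv (fun m => (Real.sqrt (m ^ 2 + ν ^ 2))⁻¹ * M m *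
          (C * Real.cos (n * ν) + D * Real.sin (n * ν)))) μ
        + (μ ^ 2 - ν ^ 2) / (μ * (μ ^ 2 + ν ^ 2)) *
            deriv (fun m => (Real.sqrt (m ^ 2 + ν ^ 2))⁻¹ * M m *
              (C * Real.cos (n * ν) + D * Real.sin (n * ν))) μ
        + 2 * ν / (μ ^ 2 + ν ^ 2) *
            deriv (fun nn => (Real.sqrt (μ ^ 2 + nn ^ 2))⁻¹ * M μ *
              (C * Real.cos (n * nn) + D * Real.sin (n * nn))) ν
        + deriv (deriv (fun nn => (Real.sqrt (μ ^ 2 + nn ^ 2))⁻¹ * M μ *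
            (C * Real.cos (n * nn) + D * Real.sin (n * nn)))) ν = 0 :=
  tangent_sphere_stokes_solution_general n M C D hM1 hM2 hM
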